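/- Let n ≥ 1 and let (λ̄_j)_{j∈ℕ} be a sequence in ℝⁿ. Let (u_j) and (v_j) be sequences of complex numbers, m̄ = (m₁,…,mₙ) ∈ [0,∞)ⁿ and C > 0 such that for every s̄ ∈ ℤⁿ one has ∑_{j : λ̄_j ∈ R_{s̄}} |u_j|² ≤ C ∏_{k=1}^n (1+|s_k|)^{m_k} and ∑_{j : λ̄_j ∈ R_{s̄}} |v_j|² ≤ C ∏_{k=1}^n (1+|s_k|)^{m_k}. Let ρ : ℝ → ℝ be measurable, rapidly decreasing, with ∫_ℝ ρ = 1, and let c̄ = (c₁,…,cₙ) ∈ ℝⁿ have all components nonzero. For λ ≥ 1 and μ̄ ∈ ℝⁿ define h_λ(μ̄) = ∏_{k=1}^n 𝟙_{[−λ|c_k|, λ|c_k|]}(μ_k) − ∏_{k=1}^n ∫_{μ_k − λ|c_k|}^{μ_k + λ|c_k|} ρ(s) ds. Then there exists C′ > 0 such that for all λ ≥ 1, ∑_{j=0}^∞ |h_λ(λ̄_j)| · |u_j| · |v_j| ≤ C′ λ^{|m̄| + n − 1}. -/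

import Mathlib

/-!
For a single coordinate, write `I(t) = 1_{[-a,a]}(t)` and `F(t) = ∫_{t-a}^{t+a} ρ`. Since `∫ ρ = 1`
and `ρ` decays rapidly, `I - F` is a tail integral of `ρ` and so decays like
`(1 + ||t| - a|)^{-Q}` for every `Q`: it is concentrated near the two edges `±a`, while `I` and
`F` themselves are bounded by the indicator plus that term. Telescoping the product difference
leaves, in each summand, one such edge factor and `n - 1` box factors. Grouping the `λ̄_j` by the
unit cube `R_{s̄}` containing them, `|u_j| |v_j| ≤ |u_j|² + |v_j|²` and the hypotheses bound each
cube's contribution by its weight `∏ (1 + |s_k|)^{m_k}`; summed over `s_k ∈ ℤ` with `a = λ |c_k|`,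
an edge factor costs `O(λ^{m_k})` and a box factor `O(λ^{m_k + 1})`, which gives `λ^{|m̄| + n - 1}`.
-/

open scoped ENNReal
open MeasureTheory Set Finset

theorem Finset.abs_prod_sub_prod_le {ι : Type*} [DecidableEq ι] (s : Finset ι)
    {x y M D : ι → ℝ} (hx : ∀ i ∈ s, |x i| ≤ M i) (hy : ∀ i ∈ s, |y i| ≤ M i)
    (hD : ∀ i ∈ s, |x i - y i| ≤ D i) :
    |∏ i ∈ s, x i - ∏ i ∈ s, y i| ≤ ∑ i ∈ s, D i * ∏ l ∈ s.erase i, M l := by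
  induction s using Finset.induction_on with
  | empty => simp
  | insert a t ha ih =>
    simp only [Finset.forall_mem_insert] at hx hy hD
    have hty : |∏ i ∈ t, y i| ≤ ∏ i ∈ t, M i := by
      rw [Finset.abs_prod]
      exact Finset.prod_le_prod (fun i _ => abs_nonneg _) hy.2
    have hsplit : ∑ i ∈ t, D i * ∏ l ∈ (insert a t).erase i, M l =
        M a * ∑ i ∈ t, D i * ∏ l ∈ t.erase i, M l := by
      rw [Finset.mul_sum]
      refine Finset.sum_congr rfl fun i hi => ?_
      rw [Finset.erase_insert_of_ne (ne_of_mem_of_not_mem hi ha).symm,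
        Finset.prod_insert fun h => ha (Finset.mem_of_mem_erase h)]
      ring
    rw [Finset.prod_insert ha, Finset.prod_insert ha, Finset.sum_insert ha,
      Finset.erase_insert_eq_erase, Finset.erase_eq_of_notMem ha, hsplit]
    calc |x a * ∏ i ∈ t, x i - y a * ∏ i ∈ t, y i|
        = |x a * (∏ i ∈ t, x i - ∏ i ∈ t, y i) + (x a - y a) * ∏ i ∈ t, y i| := by ring_nf
      _ ≤ |x a| * |∏ i ∈ t, x i - ∏ i ∈ t, y i| + |x a - y a| * |∏ i ∈ t, y i| := by
          rw [← abs_mul, ← abs_mul]; exact abs_add_le _ _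
      _ ≤ M a * ∑ i ∈ t, D i * ∏ l ∈ t.erase i, M l + D a * ∏ i ∈ t, M i :=
          add_le_add
            (mul_le_mul hx.1 (ih hx.2 hy.2 hD.2) (abs_nonneg _) ((abs_nonneg _).trans hx.1))
            (mul_le_mul hD.1 hty (abs_nonneg _) ((abs_nonneg _).trans hD.1))
      _ = _ := by ring

theorem ENNReal.tsum_fin_pi_prod {β : Type*} :
    ∀ {n : ℕ} (f : Fin n → β → ℝ≥0∞), ∑' s : Fin n → β, ∏ k, f k (s k) = ∏ k, ∑' b, f k b
  | 0, f => by simp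
  | n + 1, f => by
    rw [← (Fin.consEquiv fun _ => β).tsum_eq, ENNReal.tsum_prod', Fin.prod_univ_succ,
      ← ENNReal.tsum_fin_pi_prod fun k => f k.succ, ← ENNReal.tsum_mul_right]
    refine tsum_congr fun b => ?_
    rw [← ENNReal.tsum_mul_left]
    refine tsum_congr fun s => ?_
    simp [Fin.prod_univ_succ]

theorem ENNReal.tsum_sum_mul_prod_erase {β : Type*} {n : ℕ} (g f : Fin n → β → ℝ≥0∞) :
    ∑' s : Fin n → β, ∑ k, g k (s k) * ∏ l ∈ univ.erase k, f l (s l) =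
      ∑ k, (∑' b, g k b) * ∏ l ∈ univ.erase k, ∑' b, f l b := by
  rw [Summable.tsum_finsetSum fun _ _ => ENNReal.summable]
  refine Finset.sum_congr rfl fun k _ => ?_
  have hsplit : ∀ (φ ψ : Fin n → ℝ≥0∞),
      ∏ l, (if l = k then ψ l else φ l) = ψ k * ∏ l ∈ univ.erase k, φ l := by
    intro φ ψ
    rw [Finset.prod_ite, Finset.filter_eq', Finset.filter_ne', if_pos (Finset.mem_univ k),
      Finset.prod_singleton]
  calc ∑' s : Fin n → β, g k (s k) * ∏ l ∈ univ.erase k, f l (s l)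
      = ∑' s : Fin n → β, ∏ l, (if l = k then g l (s l) else f l (s l)) :=
        tsum_congr fun s => (hsplit (fun l => f l (s l)) fun l => g l (s l)).symm
    _ = ∏ l, ∑' b, (if l = k then g l b else f l b) :=
        ENNReal.tsum_fin_pi_prod fun l b => if l = k then g l b else f l b
    _ = _ := by
        rw [← hsplit (fun l => ∑' b, f l b) fun l => ∑' b, g l b]
        exact Finset.prod_congr rfl fun l _ => by split_ifs <;> rfl

theorem abs_floor_sub_le_one (t : ℝ) : |(⌊t⌋ : ℝ) - t| ≤ 1 := by
  rw [abs_sub_comm, Int.self_sub_floor, Int.abs_fract]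
  exact (Int.fract_lt_one t).le

theorem abs_floor_le (t : ℝ) : |(⌊t⌋ : ℝ)| ≤ |t| + 1 := by
  linarith [abs_sub_abs_le_abs_sub (⌊t⌋ : ℝ) t, abs_floor_sub_le_one t]

theorem summable_inv_one_add_abs_sq : Summable fun z : ℤ => ((1 + |(z : ℝ)|) ^ 2)⁻¹ := by
  refine (Real.summable_abs_int_rpow one_lt_two).of_norm_bounded_eventually ?_
  filter_upwards [Filter.eventually_cofinite_ne 0] with z hz
  have hz' : 0 < |(z : ℝ)| := abs_pos.2 (Int.cast_ne_zero.2 hz)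
  rw [Real.norm_of_nonneg (by positivity), Real.rpow_neg hz'.le, Real.rpow_two]
  exact inv_anti₀ (by positivity) (pow_le_pow_left₀ hz'.le (by linarith) 2)

theorem exists_tsum_ofReal_inv_one_add_abs_sub_sq_le :
    ∃ Z : ℝ, 0 ≤ Z ∧ ∀ x : ℝ,
      ∑' z : ℤ, ENNReal.ofReal ((1 + |z - x|) ^ 2)⁻¹ ≤ ENNReal.ofReal Z := by
  set f : ℤ → ℝ := fun z => ((1 + |(z : ℝ)|) ^ 2)⁻¹
  refine ⟨4 * ∑' z, f z, by positivity, fun x => ?_⟩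
  have hshift : ∀ z : ℤ, ((1 + |z - x|) ^ 2)⁻¹ ≤ 4 * f (z - ⌊x⌋) := by
    intro z
    have hfloor : |((z - ⌊x⌋ : ℤ) : ℝ)| ≤ |z - x| + 1 := by
      rw [Int.cast_sub, show (z : ℝ) - ⌊x⌋ = (z - x) + (x - ⌊x⌋) by ring]
      refine (abs_add_le _ _).trans (add_le_add_right ?_ _)
      rw [abs_sub_comm]
      exact abs_floor_sub_le_one x
    rw [show (4 : ℝ) * f (z - ⌊x⌋) = ((1 + |((z - ⌊x⌋ : ℤ) : ℝ)|) ^ 2 / 4)⁻¹ by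
      simp only [f]; field_simp]
    refine inv_anti₀ (by positivity) ?_
    nlinarith [abs_nonneg (z - x : ℝ), abs_nonneg ((z - ⌊x⌋ : ℤ) : ℝ)]
  calc ∑' z : ℤ, ENNReal.ofReal ((1 + |z - x|) ^ 2)⁻¹
      ≤ ∑' z : ℤ, ENNReal.ofReal (4 * f (z - ⌊x⌋)) :=
        ENNReal.tsum_le_tsum fun z => ENNReal.ofReal_le_ofReal (hshift z)
    _ = ∑' z : ℤ, ENNReal.ofReal (4 * f z) :=
        (Equiv.subRight ⌊x⌋).tsum_eq fun z => ENNReal.ofReal (4 * f z)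
    _ = ENNReal.ofReal (4 * ∑' z, f z) := by
        rw [← ENNReal.ofReal_tsum_of_nonneg (fun z => by positivity)
          (summable_inv_one_add_abs_sq.mul_left 4), tsum_mul_left]

theorem ENNReal.tsum_ofReal_const_mul_le {ι : Type*} {f : ι → ℝ} {c B : ℝ} (hc : 0 ≤ c)
    (hf : ∑' i, ENNReal.ofReal (f i) ≤ ENNReal.ofReal B) :
    ∑' i, ENNReal.ofReal (c * f i) ≤ ENNReal.ofReal (c * B) := by
  simp_rw [ENNReal.ofReal_mul hc]
  rw [ENNReal.tsum_mul_left]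
  gcongr

theorem tsum_ofReal_indicator_abs_le {b : ℝ} (hb : 0 ≤ b) :
    ∑' z : ℤ, ENNReal.ofReal (if |(z : ℝ)| ≤ b then 1 else 0) ≤ ENNReal.ofReal (2 * b + 1) := by
  have hmem : ∀ z : ℤ, |(z : ℝ)| ≤ b ↔ z ∈ Finset.Icc (-⌊b⌋) ⌊b⌋ := by
    intro z
    rw [Finset.mem_Icc, ← abs_le, Int.le_floor, Int.cast_abs]
  rw [tsum_eq_sum (s := Finset.Icc (-⌊b⌋) ⌊b⌋) fun z hz => by simp [hmem, hz]]
  calc ∑ z ∈ Finset.Icc (-⌊b⌋) ⌊b⌋, ENNReal.ofReal (if |(z : ℝ)| ≤ b then 1 else 0)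
      = ((Finset.Icc (-⌊b⌋) ⌊b⌋).card : ℝ≥0∞) := by
        rw [Finset.card_eq_sum_ones, Nat.cast_sum]
        exact Finset.sum_congr rfl fun z hz => by simp [(hmem z).2 hz]
    _ ≤ ENNReal.ofReal (2 * b + 1) := by
        rw [← ENNReal.ofReal_natCast]
        refine ENNReal.ofReal_le_ofReal ?_
        have hcard := Int.card_Icc_of_le (-⌊b⌋) ⌊b⌋ (by linarith [Int.floor_nonneg.2 hb])
        have hcard' : ((Finset.Icc (-⌊b⌋) ⌊b⌋).card : ℝ) = 2 * ⌊b⌋ + 1 := by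
          exact_mod_cast (by rw [hcard]; ring :
            ((Finset.Icc (-⌊b⌋) ⌊b⌋).card : ℤ) = 2 * ⌊b⌋ + 1)
        rw [hcard']
        linarith [Int.floor_le b]

noncomputable def edgeProfile (a : ℝ) (z : ℤ) : ℝ := ((1 + |(|(z : ℝ)| - a)|) ^ 2)⁻¹

noncomputable def boxProfile (a : ℝ) (z : ℤ) : ℝ :=
  (if |(z : ℝ)| ≤ a + 1 then 1 else 0) + edgeProfile a z

theorem edgeProfile_nonneg (a : ℝ) (z : ℤ) : 0 ≤ edgeProfile a z := by
  unfold edgeProfile; positivity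

theorem boxProfile_nonneg (a : ℝ) (z : ℤ) : 0 ≤ boxProfile a z := by
  unfold boxProfile; have := edgeProfile_nonneg a z; positivity

theorem edgeProfile_le_add (a : ℝ) (z : ℤ) :
    edgeProfile a z ≤ ((1 + |z - a|) ^ 2)⁻¹ + ((1 + |z - -a|) ^ 2)⁻¹ := by
  unfold edgeProfile
  rcases le_or_gt 0 (z : ℝ) with hz | hz
  · rw [abs_of_nonneg hz]
    exact le_add_of_nonneg_right (by positivity)
  · rw [abs_of_neg hz, show -(z : ℝ) - a = -(z - -a) by ring, abs_neg]
    exact le_add_of_nonneg_left (by positivity)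

section Lattice

variable {Z : ℝ} (hZ0 : 0 ≤ Z)
  (hZ : ∀ x : ℝ, ∑' z : ℤ, ENNReal.ofReal ((1 + |z - x|) ^ 2)⁻¹ ≤ ENNReal.ofReal Z)
include hZ0 hZ

theorem tsum_ofReal_edgeProfile_le (a : ℝ) :
    ∑' z, ENNReal.ofReal (edgeProfile a z) ≤ ENNReal.ofReal (2 * Z) := by
  calc ∑' z, ENNReal.ofReal (edgeProfile a z)
      ≤ ∑' z : ℤ, (ENNReal.ofReal ((1 + |z - a|) ^ 2)⁻¹ +
          ENNReal.ofReal ((1 + |z - -a|) ^ 2)⁻¹) :=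
        ENNReal.tsum_le_tsum fun z => (ENNReal.ofReal_le_ofReal (edgeProfile_le_add a z)).trans
          ENNReal.ofReal_add_le
    _ ≤ ENNReal.ofReal Z + ENNReal.ofReal Z := by
        rw [ENNReal.tsum_add]; exact add_le_add (hZ a) (hZ (-a))
    _ = ENNReal.ofReal (2 * Z) := by rw [← ENNReal.ofReal_add hZ0 hZ0, two_mul]

theorem tsum_ofReal_boxProfile_le {a : ℝ} (ha : 0 ≤ a) :
    ∑' z, ENNReal.ofReal (boxProfile a z) ≤ ENNReal.ofReal (2 * a + 3 + 2 * Z) := by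
  calc ∑' z, ENNReal.ofReal (boxProfile a z)
      = ∑' z : ℤ, (ENNReal.ofReal (if |(z : ℝ)| ≤ a + 1 then 1 else 0) +
          ENNReal.ofReal (edgeProfile a z)) :=
        tsum_congr fun z => ENNReal.ofReal_add (by positivity) (edgeProfile_nonneg a z)
    _ ≤ ENNReal.ofReal (2 * (a + 1) + 1) + ENNReal.ofReal (2 * Z) := by
        rw [ENNReal.tsum_add]
        exact add_le_add (tsum_ofReal_indicator_abs_le (by linarith))
          (tsum_ofReal_edgeProfile_le hZ0 hZ a)
    _ = ENNReal.ofReal (2 * a + 3 + 2 * Z) := by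
        rw [← ENNReal.ofReal_add (by linarith) (by positivity)]; ring_nf

end Lattice

theorem one_add_mul_rpow_le {lam b m : ℝ} (hlam : 1 ≤ lam) (hb : 0 ≤ b) (hm : 0 ≤ m) :
    (1 + lam * b) ^ m ≤ lam ^ m * (1 + b) ^ m := by
  rw [← Real.mul_rpow (by linarith) (by linarith)]
  exact Real.rpow_le_rpow (by positivity) (by nlinarith) hm

theorem exists_tsum_ofReal_profile_le {b m L : ℝ} (hb : 0 ≤ b) (hm : 0 ≤ m) (hL : 0 ≤ L) :
    ∃ κ : ℝ, 0 ≤ κ ∧ ∀ lam : ℝ, 1 ≤ lam →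
      ∑' z, ENNReal.ofReal (L * (1 + lam * b) ^ m * edgeProfile (lam * b) z) ≤
          ENNReal.ofReal (κ * lam ^ m) ∧
        ∑' z, ENNReal.ofReal (L * (1 + lam * b) ^ m * boxProfile (lam * b) z) ≤
          ENNReal.ofReal (κ * lam ^ (m + 1)) := by
  obtain ⟨Z, hZ0, hZ⟩ := exists_tsum_ofReal_inv_one_add_abs_sub_sq_le
  refine ⟨L * (1 + b) ^ (m + 1) * (2 * Z + 3), by positivity, fun lam hlam => ⟨?_, ?_⟩⟩
  · refine (ENNReal.tsum_ofReal_const_mul_le (by positivity)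
      (tsum_ofReal_edgeProfile_le hZ0 hZ _)).trans (ENNReal.ofReal_le_ofReal ?_)
    calc L * (1 + lam * b) ^ m * (2 * Z)
        ≤ L * (lam ^ m * (1 + b) ^ (m + 1)) * (2 * Z + 3) := by
          gcongr
          · exact (one_add_mul_rpow_le hlam hb hm).trans
              (by gcongr; exacts [by linarith, by linarith])
          · linarith
      _ = _ := by ring
  · refine (ENNReal.tsum_ofReal_const_mul_le (by positivity)
      (tsum_ofReal_boxProfile_le hZ0 hZ (by positivity))).trans (ENNReal.ofReal_le_ofReal ?_)
    have hlb : 0 ≤ lam * b := mul_nonneg (by linarith) hb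
    have hlin : 2 * (lam * b) + 3 + 2 * Z ≤ lam * (1 + b) * (2 * Z + 3) := by
      nlinarith [mul_nonneg (sub_nonneg.2 hlam) hZ0, mul_nonneg hlb hZ0]
    calc L * (1 + lam * b) ^ m * (2 * (lam * b) + 3 + 2 * Z)
        ≤ L * (lam ^ m * (1 + b) ^ m) * (lam * (1 + b) * (2 * Z + 3)) := by
          gcongr
          exact one_add_mul_rpow_le hlam hb hm
      _ = _ := by
          rw [Real.rpow_add_one (by positivity), Real.rpow_add_one (by positivity)]; ring

theorem rpow_mul_inv_pow_le {X m : ℝ} {k Q : ℕ} (hX : 1 ≤ X) (hmQ : m + k ≤ Q) :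
    X ^ m * (X ^ Q)⁻¹ ≤ (X ^ k)⁻¹ := by
  have hX0 : 0 < X := by linarith
  calc X ^ m * (X ^ Q)⁻¹ ≤ X ^ ((Q : ℝ) - k) * (X ^ Q)⁻¹ :=
        mul_le_mul_of_nonneg_right
          (Real.rpow_le_rpow_of_exponent_le hX (by linarith)) (by positivity)
    _ = (X ^ k)⁻¹ := by
        rw [Real.rpow_sub hX0, Real.rpow_natCast, Real.rpow_natCast]
        field_simp

theorem rpow_mul_inv_pow_le_edgeProfile {a m t : ℝ} {Q : ℕ} (ha : 0 ≤ a) (hm : 0 ≤ m)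
    (hmQ : m + 2 ≤ Q) :
    (1 + |(⌊t⌋ : ℝ)|) ^ m * ((1 + |(|t| - a)|) ^ Q)⁻¹ ≤
      2 ^ Q * ((1 + a) ^ m * edgeProfile a ⌊t⌋) := by
  set X := 1 + |(|(⌊t⌋ : ℝ)| - a)|
  have hX : 1 ≤ X := le_add_of_nonneg_right (abs_nonneg _)
  -- Peetre's inequality, and moving from `t` to `⌊t⌋` costs a factor `2`
  have hpeetre : 1 + |(⌊t⌋ : ℝ)| ≤ (1 + a) * X := by
    nlinarith [le_abs_self (|(⌊t⌋ : ℝ)| - a), abs_nonneg (|(⌊t⌋ : ℝ)| - a)]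
  have hshift : ((1 + |(|t| - a)|) ^ Q)⁻¹ ≤ 2 ^ Q * (X ^ Q)⁻¹ := by
    have h1 := abs_sub_abs_le_abs_sub (|(⌊t⌋ : ℝ)| - a) (|t| - a)
    rw [sub_sub_sub_cancel_right] at h1
    have h2 := abs_abs_sub_abs_le_abs_sub (⌊t⌋ : ℝ) t
    rw [show (2 : ℝ) ^ Q * (X ^ Q)⁻¹ = ((X / 2) ^ Q)⁻¹ by
      rw [div_pow, inv_div, div_eq_mul_inv]]
    refine inv_anti₀ (by positivity) (pow_le_pow_left₀ (by positivity) ?_ Q)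
    linarith [abs_floor_sub_le_one t, abs_nonneg (|t| - a),
      show X = 1 + |(|(⌊t⌋ : ℝ)| - a)| from rfl]
  calc (1 + |(⌊t⌋ : ℝ)|) ^ m * ((1 + |(|t| - a)|) ^ Q)⁻¹
      ≤ ((1 + a) * X) ^ m * (2 ^ Q * (X ^ Q)⁻¹) :=
        mul_le_mul (Real.rpow_le_rpow (by positivity) hpeetre hm) hshift (by positivity)
          (by positivity)
    _ = 2 ^ Q * ((1 + a) ^ m * (X ^ m * (X ^ Q)⁻¹)) := by
        rw [Real.mul_rpow (by linarith) (by linarith)]; ring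
    _ ≤ 2 ^ Q * ((1 + a) ^ m * edgeProfile a ⌊t⌋) := by
        gcongr
        exact rpow_mul_inv_pow_le hX (by exact_mod_cast hmQ)

theorem one_add_abs_floor_rpow_le_of_abs_le {a m t : ℝ} {Q : ℕ} (ht : |t| ≤ a) (hm : 0 ≤ m)
    (hmQ : m ≤ Q) :
    (1 + |(⌊t⌋ : ℝ)|) ^ m ≤ 2 ^ Q * (1 + a) ^ m := by
  have ha : 0 ≤ a := (abs_nonneg t).trans ht
  calc (1 + |(⌊t⌋ : ℝ)|) ^ m ≤ (2 * (1 + a)) ^ m := by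
        gcongr
        linarith [abs_floor_le t, abs_nonneg t]
    _ = 2 ^ m * (1 + a) ^ m := Real.mul_rpow (by norm_num) (by linarith)
    _ ≤ 2 ^ Q * (1 + a) ^ m := by
        refine mul_le_mul_of_nonneg_right ?_ (by positivity)
        rw [← Real.rpow_natCast]
        exact Real.rpow_le_rpow_of_exponent_le (by norm_num) hmQ

theorem integrable_inv_one_add_abs_sq : Integrable fun s : ℝ => ((1 + |s|) ^ 2)⁻¹ := by
  refine (integrable_one_add_norm (E := ℝ) (μ := volume) (r := 2) (by simp)).congr
    (ae_of_all _ fun s => ?_)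
  simp only [Real.norm_eq_abs]
  rw [Real.rpow_neg (by positivity), Real.rpow_two]

section Smoothing

variable {ρ : ℝ → ℝ} {A : ℝ} {Q : ℕ} (hρ : ∀ s, |ρ s| ≤ A * ((1 + |s|) ^ (Q + 2))⁻¹)
include hρ

theorem nonneg_of_abs_le_mul_inv_pow : 0 ≤ A := by
  simpa using (abs_nonneg _).trans (hρ 0)

variable (hmeas : Measurable ρ)
include hmeas

theorem integrable_of_abs_le_mul_inv_pow : Integrable ρ := by
  have hA := nonneg_of_abs_le_mul_inv_pow hρ
  refine (integrable_inv_one_add_abs_sq.const_mul A).mono' hmeas.aestronglyMeasurable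
    (ae_of_all _ fun s => (hρ s).trans ?_)
  gcongr
  exacts [le_add_of_nonneg_right (abs_nonneg s), by omega]

theorem abs_setIntegral_le_of_le_abs {d : ℝ} (hd : 0 ≤ d) {S : Set ℝ}
    (hS : MeasurableSet S) (hdS : ∀ s ∈ S, d ≤ |s|) :
    |∫ s in S, ρ s| ≤ A * (∫ s, ((1 + |s|) ^ 2)⁻¹) * ((1 + d) ^ Q)⁻¹ := by
  have hA := nonneg_of_abs_le_mul_inv_pow hρ
  set g : ℝ → ℝ := fun s => A * ((1 + d) ^ Q)⁻¹ * ((1 + |s|) ^ 2)⁻¹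
  have hg : Integrable g := integrable_inv_one_add_abs_sq.const_mul _
  have hρg : ∀ s ∈ S, |ρ s| ≤ g s := by
    intro s hs
    calc |ρ s| ≤ A * ((1 + |s|) ^ Q)⁻¹ * ((1 + |s|) ^ 2)⁻¹ := by
          rw [mul_assoc, ← mul_inv, ← pow_add]; exact hρ s
      _ ≤ A * ((1 + d) ^ Q)⁻¹ * ((1 + |s|) ^ 2)⁻¹ := by
          gcongr
          linarith [hdS s hs]
  calc |∫ s in S, ρ s| ≤ ∫ s in S, |ρ s| := abs_integral_le_integral_abs
    _ ≤ ∫ s in S, g s :=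
        setIntegral_mono_on (integrable_of_abs_le_mul_inv_pow hρ hmeas).abs.integrableOn
          hg.integrableOn hS hρg
    _ ≤ ∫ s, g s := setIntegral_le_integral hg (ae_of_all _ fun s => by positivity)
    _ = A * (∫ s, ((1 + |s|) ^ 2)⁻¹) * ((1 + d) ^ Q)⁻¹ := by
        simp only [g]; rw [integral_const_mul]; ring

theorem abs_indicator_sub_intervalIntegral_le (hint : ∫ s, ρ s = 1) {a : ℝ} (ha : 0 ≤ a)
    (t : ℝ) :
    |Set.indicator (Icc (-a) a) (fun _ => (1 : ℝ)) t - ∫ s in (t - a)..(t + a), ρ s| ≤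
      2 * (A * ∫ s, ((1 + |s|) ^ 2)⁻¹) * ((1 + |(|t| - a)|) ^ Q)⁻¹ := by
  have hρi := integrable_of_abs_le_mul_inv_pow hρ hmeas
  have hbound : 0 ≤ A * (∫ s, ((1 + |s|) ^ 2)⁻¹) * ((1 + |(|t| - a)|) ^ Q)⁻¹ := by
    have hA := nonneg_of_abs_le_mul_inv_pow hρ
    have hB : 0 ≤ ∫ s : ℝ, ((1 + |s|) ^ 2)⁻¹ := integral_nonneg fun s => by positivity
    positivity
  by_cases ht : |t| ≤ a
  · rw [Set.indicator_of_mem (s := Icc (-a) a) (abs_le.1 ht),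
      abs_of_nonpos (by linarith : |t| - a ≤ 0), neg_sub]
    -- inside the box, `1 - F(t)` is the mass of `ρ` on the two tails beyond the window
    have htails : 1 - ∫ s in (t - a)..(t + a), ρ s =
        (∫ s in Iic (t - a), ρ s) + ∫ s in Ioi (t + a), ρ s := by
      rw [← intervalIntegral.integral_Iic_sub_Iic hρi.integrableOn hρi.integrableOn, ← hint,
        ← intervalIntegral.integral_Iic_add_Ioi (b := t + a) hρi.integrableOn hρi.integrableOn]
      ring
    have hleft := abs_setIntegral_le_of_le_abs hρ hmeas (sub_nonneg.2 ht) measurableSet_Iic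
      fun s (hs : s ≤ t - a) => by linarith [le_abs_self t, neg_le_abs s]
    have hright := abs_setIntegral_le_of_le_abs hρ hmeas (sub_nonneg.2 ht) measurableSet_Ioi
      fun s (hs : t + a < s) => by linarith [neg_abs_le t, le_abs_self s]
    rw [htails]
    linarith [abs_add_le (∫ s in Iic (t - a), ρ s) (∫ s in Ioi (t + a), ρ s)]
  · rw [not_le] at ht
    rw [abs_of_pos (by linarith : 0 < |t| - a)] at hbound ⊢
    rw [Set.indicator_of_notMem (s := Icc (-a) a) fun h => ht.not_ge (abs_le.2 h), zero_sub,
      abs_neg, intervalIntegral.integral_of_le (by linarith)]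
    have hwindow := abs_setIntegral_le_of_le_abs hρ hmeas (d := |t| - a) (by linarith)
      measurableSet_Ioc fun s (hs : t - a < s ∧ s ≤ t + a) => by
        have : |t - s| ≤ a := abs_le.2 ⟨by linarith [hs.2], by linarith [hs.1]⟩
        linarith [abs_sub_abs_le_abs_sub t s]
    linarith

end Smoothing

theorem exists_abs_indicator_sub_intervalIntegral_le {ρ : ℝ → ℝ} (hmeas : Measurable ρ)
    (hdecay : ∀ N : ℕ, ∃ A : ℝ, ∀ s : ℝ, |ρ s| ≤ A * ((1 + |s|) ^ N)⁻¹)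
    (hint : ∫ s, ρ s = 1) (Q : ℕ) :
    ∃ K : ℝ, 0 ≤ K ∧ ∀ a : ℝ, 0 ≤ a → ∀ t : ℝ,
      |Set.indicator (Icc (-a) a) (fun _ => (1 : ℝ)) t - ∫ s in (t - a)..(t + a), ρ s| ≤
        K * ((1 + |(|t| - a)|) ^ Q)⁻¹ := by
  obtain ⟨A, hA⟩ := hdecay (Q + 2)
  have hA0 := nonneg_of_abs_le_mul_inv_pow hA
  have hB : 0 ≤ ∫ s : ℝ, ((1 + |s|) ^ 2)⁻¹ := integral_nonneg fun s => by positivity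
  exact ⟨2 * (A * ∫ s : ℝ, ((1 + |s|) ^ 2)⁻¹), by positivity,
    fun a ha t => abs_indicator_sub_intervalIntegral_le hA hmeas hint ha t⟩

theorem abs_indicator_Icc_le_ite (a t : ℝ) :
    |Set.indicator (Icc (-a) a) (fun _ => (1 : ℝ)) t| ≤ if |t| ≤ a then 1 else 0 := by
  by_cases ht : |t| ≤ a
  · rw [Set.indicator_of_mem (s := Icc (-a) a) (abs_le.1 ht), if_pos ht, abs_one]
  · rw [Set.indicator_of_notMem (s := Icc (-a) a) (fun h => ht (abs_le.2 h)), if_neg ht,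
      abs_zero]

theorem abs_mul_rpow_floor_le_profiles {a m t x y K : ℝ} {Q : ℕ} (ha : 0 ≤ a) (hm : 0 ≤ m)
    (hmQ : m + 2 ≤ Q) (hK : 0 ≤ K) (hx : |x| ≤ if |t| ≤ a then 1 else 0)
    (hxy : |x - y| ≤ K * ((1 + |(|t| - a)|) ^ Q)⁻¹) :
    |x * (1 + |(⌊t⌋ : ℝ)|) ^ m| ≤ 2 ^ Q * (K + 1) * (1 + a) ^ m * boxProfile a ⌊t⌋ ∧
      |y * (1 + |(⌊t⌋ : ℝ)|) ^ m| ≤ 2 ^ Q * (K + 1) * (1 + a) ^ m * boxProfile a ⌊t⌋ ∧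
      |x * (1 + |(⌊t⌋ : ℝ)|) ^ m - y * (1 + |(⌊t⌋ : ℝ)|) ^ m| ≤
        2 ^ Q * (K + 1) * (1 + a) ^ m * edgeProfile a ⌊t⌋ := by
  set w := (1 + |(⌊t⌋ : ℝ)|) ^ m
  set P := 2 ^ Q * (1 + a) ^ m
  set i : ℝ := if |(⌊t⌋ : ℝ)| ≤ a + 1 then 1 else 0
  set e := edgeProfile a ⌊t⌋
  have hw : 0 ≤ w := by positivity
  have hPi : 0 ≤ P * i := by positivity
  have hPe : 0 ≤ P * e := mul_nonneg (by positivity) (edgeProfile_nonneg a ⌊t⌋)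
  have hxw : |x * w| ≤ P * i := by
    rw [abs_mul, abs_of_nonneg hw]
    by_cases ht : |t| ≤ a
    · rw [if_pos ht] at hx
      rw [show i = 1 from if_pos (by linarith [abs_floor_le t]), mul_one]
      calc |x| * w ≤ 1 * w := by gcongr
        _ ≤ P := by rw [one_mul]; exact one_add_abs_floor_rpow_le_of_abs_le ht hm (by linarith)
    · rw [if_neg ht] at hx
      nlinarith [abs_nonneg x]
  have hxyw : |x * w - y * w| ≤ K * (P * e) := by
    rw [← sub_mul, abs_mul, abs_of_nonneg hw]
    calc |x - y| * w ≤ K * (w * ((1 + |(|t| - a)|) ^ Q)⁻¹) := by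
          rw [mul_comm w, ← mul_assoc]; gcongr
      _ ≤ K * (P * e) := mul_le_mul_of_nonneg_left
          ((rpow_mul_inv_pow_le_edgeProfile ha hm hmQ).trans_eq (mul_assoc _ _ _).symm) hK
  have hyw : |y * w| ≤ |x * w| + |x * w - y * w| := by
    have := abs_sub_abs_le_abs_sub (y * w) (x * w)
    rw [abs_sub_comm (y * w)] at this
    linarith
  have hbox : 2 ^ Q * (K + 1) * (1 + a) ^ m * boxProfile a ⌊t⌋ =
      P * i + K * (P * e) + (K * (P * i) + P * e) := by
    simp only [boxProfile, P, i, e]; ring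
  have hedge : 2 ^ Q * (K + 1) * (1 + a) ^ m * edgeProfile a ⌊t⌋ = K * (P * e) + P * e := by
    ring
  have hKPi := mul_nonneg hK hPi
  have hKPe := mul_nonneg hK hPe
  exact ⟨by linarith, by linarith, by linarith⟩

theorem ofReal_abs_prod_sub_prod_mul_le {ι : Type*} [Fintype ι] [DecidableEq ι] {Q : ℕ} {K : ℝ}
    (hK : 0 ≤ K) {a m t x y : ι → ℝ} (ha : ∀ k, 0 ≤ a k) (hm : ∀ k, 0 ≤ m k)
    (hmQ : ∀ k, m k + 2 ≤ Q) (hx : ∀ k, |x k| ≤ if |t k| ≤ a k then 1 else 0)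
    (hxy : ∀ k, |x k - y k| ≤ K * ((1 + |(|t k| - a k)|) ^ Q)⁻¹) :
    ENNReal.ofReal (|∏ k, x k - ∏ k, y k| * ∏ k, (1 + |(⌊t k⌋ : ℝ)|) ^ m k) ≤
      ∑ k, ENNReal.ofReal (2 ^ Q * (K + 1) * (1 + a k) ^ m k * edgeProfile (a k) ⌊t k⌋) *
        ∏ l ∈ univ.erase k,
          ENNReal.ofReal (2 ^ Q * (K + 1) * (1 + a l) ^ m l * boxProfile (a l) ⌊t l⌋) := by
  have hprofiles := fun k =>
    abs_mul_rpow_floor_le_profiles (ha k) (hm k) (hmQ k) hK (hx k) (hxy k)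
  have hweight : 0 ≤ ∏ k, (1 + |(⌊t k⌋ : ℝ)|) ^ m k := by positivity
  rw [← abs_of_nonneg hweight, ← abs_mul, sub_mul, ← prod_mul_distrib, ← prod_mul_distrib]
  refine (ENNReal.ofReal_le_ofReal (Finset.abs_prod_sub_prod_le univ
    (fun k _ => (hprofiles k).1) (fun k _ => (hprofiles k).2.1)
    (fun k _ => (hprofiles k).2.2))).trans_eq ?_
  have hbox : ∀ l, 0 ≤ 2 ^ Q * (K + 1) * (1 + a l) ^ m l * boxProfile (a l) ⌊t l⌋ :=
    fun l => mul_nonneg (by have := ha l; positivity) (boxProfile_nonneg _ _)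
  have hedge : ∀ k, 0 ≤ 2 ^ Q * (K + 1) * (1 + a k) ^ m k * edgeProfile (a k) ⌊t k⌋ :=
    fun k => mul_nonneg (by have := ha k; positivity) (edgeProfile_nonneg _ _)
  rw [ENNReal.ofReal_sum_of_nonneg fun k _ =>
    mul_nonneg (hedge k) (prod_nonneg fun l _ => hbox l)]
  refine Finset.sum_congr rfl fun k _ => ?_
  rw [ENNReal.ofReal_mul (hedge k), ENNReal.ofReal_prod_of_nonneg fun l _ => hbox l]

theorem tsum_floor_fiber_le_tsum_indicator {ι : Type*} (x : ℕ → ι → ℝ) (f : ℕ → ℝ≥0∞)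
    (s : ι → ℤ) :
    ∑' j : {j // (fun k => ⌊x j k⌋) = s}, f j ≤
      ∑' j, Set.indicator {j : ℕ | ∀ k, x j k ∈ Set.Icc ((s k : ℝ)) ((s k : ℝ) + 1)} f j := by
  refine (tsum_subtype {j | (fun k => ⌊x j k⌋) = s} f).trans_le
    (ENNReal.tsum_le_tsum fun j => Set.indicator_le_indicator_of_subset ?_ (fun _ => zero_le) j)
  rintro j rfl k
  exact ⟨Int.floor_le _, (Int.lt_floor_add_one _).le⟩

theorem tsum_ofReal_abs_mul_norm_mul_norm_le {ι : Type*} (x : ℕ → ι → ℝ) (u v : ℕ → ℂ)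
    (W : (ι → ℤ) → ℝ) (hW : ∀ s, 0 < W s) (C : ℝ)
    (hu : ∀ s : ι → ℤ,
      (∑' j, Set.indicator {j : ℕ | ∀ k, x j k ∈ Set.Icc ((s k : ℝ)) ((s k : ℝ) + 1)}
          (fun j => ENNReal.ofReal (‖u j‖ ^ 2)) j) ≤ ENNReal.ofReal (C * W s))
    (hv : ∀ s : ι → ℤ,
      (∑' j, Set.indicator {j : ℕ | ∀ k, x j k ∈ Set.Icc ((s k : ℝ)) ((s k : ℝ) + 1)}
          (fun j => ENNReal.ofReal (‖v j‖ ^ 2)) j) ≤ ENNReal.ofReal (C * W s))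
    (h : ℕ → ℝ) (P : (ι → ℤ) → ℝ≥0∞)
    (hP : ∀ j, ENNReal.ofReal (|h j| * W fun k => ⌊x j k⌋) ≤ P fun k => ⌊x j k⌋) :
    ∑' j, ENNReal.ofReal (|h j| * ‖u j‖ * ‖v j‖) ≤ 2 * ENNReal.ofReal C * ∑' s, P s := by
  set φ : ℕ → ι → ℤ := fun j k => ⌊x j k⌋
  have hfiber : ∀ s, ∑' j : {j // φ j = s}, ENNReal.ofReal (|h j| * ‖u j‖ * ‖v j‖) ≤
      2 * ENNReal.ofReal C * P s := by
    intro s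
    set w := ENNReal.ofReal (W s)
    have hw : w ≠ 0 := (ENNReal.ofReal_pos.2 (hW s)).ne'
    have hCw : ENNReal.ofReal (C * W s) = ENNReal.ofReal C * w := ENNReal.ofReal_mul' (hW s).le
    have hterm : ∀ j : {j // φ j = s}, ENNReal.ofReal (|h j| * ‖u j‖ * ‖v j‖) ≤
        P s / w * (ENNReal.ofReal (‖u j‖ ^ 2) + ENNReal.ofReal (‖v j‖ ^ 2)) := by
      rintro ⟨j, rfl⟩
      have huv : ‖u j‖ * ‖v j‖ ≤ ‖u j‖ ^ 2 + ‖v j‖ ^ 2 := by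
        nlinarith [sq_nonneg (‖u j‖ - ‖v j‖), norm_nonneg (u j), norm_nonneg (v j)]
      calc ENNReal.ofReal (|h j| * ‖u j‖ * ‖v j‖)
          ≤ ENNReal.ofReal |h j| *
              (ENNReal.ofReal (‖u j‖ ^ 2) + ENNReal.ofReal (‖v j‖ ^ 2)) := by
            rw [← ENNReal.ofReal_add (by positivity) (by positivity),
              ← ENNReal.ofReal_mul (abs_nonneg _), mul_assoc]
            gcongr
        _ ≤ _ := by
            gcongr
            rw [ENNReal.le_div_iff_mul_le (Or.inl hw) (Or.inl ENNReal.ofReal_ne_top),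
              ← ENNReal.ofReal_mul (abs_nonneg _)]
            exact hP j
    calc ∑' j : {j // φ j = s}, ENNReal.ofReal (|h j| * ‖u j‖ * ‖v j‖)
        ≤ P s / w * (∑' j : {j // φ j = s}, ENNReal.ofReal (‖u j‖ ^ 2) +
            ∑' j : {j // φ j = s}, ENNReal.ofReal (‖v j‖ ^ 2)) := by
          rw [← ENNReal.tsum_add, ← ENNReal.tsum_mul_left]
          exact ENNReal.tsum_le_tsum hterm
      _ ≤ P s / w * (ENNReal.ofReal C * w + ENNReal.ofReal C * w) := by
          rw [← hCw]
          gcongr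
          exacts [(tsum_floor_fiber_le_tsum_indicator x _ s).trans (hu s),
            (tsum_floor_fiber_le_tsum_indicator x _ s).trans (hv s)]
      _ = 2 * ENNReal.ofReal C * (P s / w * w) := by ring
      _ = 2 * ENNReal.ofReal C * P s := by rw [ENNReal.div_mul_cancel hw ENNReal.ofReal_ne_top]
  calc ∑' j, ENNReal.ofReal (|h j| * ‖u j‖ * ‖v j‖)
      = ∑' s, ∑' j : {j // φ j = s}, ENNReal.ofReal (|h j| * ‖u j‖ * ‖v j‖) := by
        rw [← (Equiv.sigmaFiberEquiv φ).tsum_eq, ENNReal.tsum_sigma']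
        rfl
    _ ≤ ∑' s, 2 * ENNReal.ofReal C * P s := ENNReal.tsum_le_tsum hfiber
    _ = 2 * ENNReal.ofReal C * ∑' s, P s := ENNReal.tsum_mul_left

theorem sum_mul_prod_erase_le_ofReal {ι : Type*} [Fintype ι] [DecidableEq ι]
    {G F : ι → ℝ≥0∞} {κ m : ι → ℝ} {lam : ℝ} (hlam : 0 < lam) (hκ : ∀ k, 0 ≤ κ k)
    (hG : ∀ k, G k ≤ ENNReal.ofReal (κ k * lam ^ m k))
    (hF : ∀ k, F k ≤ ENNReal.ofReal (κ k * lam ^ (m k + 1))) :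
    ∑ k, G k * ∏ l ∈ univ.erase k, F l ≤
      ENNReal.ofReal
        (Fintype.card ι * (∏ k, κ k) * lam ^ (∑ k, m k + Fintype.card ι - 1)) := by
  set X := (∏ k, κ k) * lam ^ (∑ k, m k + Fintype.card ι - 1)
  have hterm : ∀ k, G k * ∏ l ∈ univ.erase k, F l ≤ ENNReal.ofReal X := by
    intro k
    have hexp : m k + ∑ l ∈ univ.erase k, (m l + 1) = ∑ l, m l + Fintype.card ι - 1 := by
      rw [sum_add_distrib, ← add_assoc, add_sum_erase _ _ (mem_univ k), sum_const,
        card_erase_of_mem (mem_univ k), card_univ, nsmul_one,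
        Nat.cast_pred (Fintype.card_pos_iff.2 ⟨k⟩)]
      ring
    calc G k * ∏ l ∈ univ.erase k, F l
        ≤ ENNReal.ofReal (κ k * lam ^ m k) *
            ∏ l ∈ univ.erase k, ENNReal.ofReal (κ l * lam ^ (m l + 1)) := by
          gcongr with l
          exacts [hG k, hF l]
      _ = ENNReal.ofReal ((κ k * ∏ l ∈ univ.erase k, κ l) *
            (lam ^ m k * ∏ l ∈ univ.erase k, lam ^ (m l + 1))) := by
          rw [← ENNReal.ofReal_prod_of_nonneg fun l _ => by have := hκ l; positivity,
            ← ENNReal.ofReal_mul (by have := hκ k; positivity), prod_mul_distrib]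
          congr 1
          ring
      _ = ENNReal.ofReal X := by
          rw [mul_prod_erase _ _ (mem_univ k), ← Real.rpow_sum_of_pos hlam,
            ← Real.rpow_add hlam, hexp]
  calc ∑ k, G k * ∏ l ∈ univ.erase k, F l ≤ ∑ _k : ι, ENNReal.ofReal X :=
        sum_le_sum fun k _ => hterm k
    _ = ENNReal.ofReal (Fintype.card ι * X) := by
        rw [sum_const, card_univ, nsmul_eq_mul,
          ENNReal.ofReal_mul (Nat.cast_nonneg _), ENNReal.ofReal_natCast]
    _ = _ := by rw [mul_assoc]

open scoped ENNReal in
theorem tauberian_estimate_general (n : ℕ)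
    (lamb : ℕ → Fin n → ℝ) (u v : ℕ → ℂ)
    (m : Fin n → ℝ) (hm : ∀ k, 0 ≤ m k) (C : ℝ)
    (hu : ∀ s : Fin n → ℤ,
      (∑' j, Set.indicator
          {j : ℕ | ∀ k, lamb j k ∈ Set.Icc ((s k : ℝ)) ((s k : ℝ) + 1)}
          (fun j => ENNReal.ofReal (‖u j‖ ^ 2)) j) ≤
        ENNReal.ofReal (C * ∏ k, (1 + |(s k : ℝ)|) ^ (m k)))
    (hv : ∀ s : Fin n → ℤ,
      (∑' j, Set.indicator
          {j : ℕ | ∀ k, lamb j k ∈ Set.Icc ((s k : ℝ)) ((s k : ℝ) + 1)}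
          (fun j => ENNReal.ofReal (‖v j‖ ^ 2)) j) ≤
        ENNReal.ofReal (C * ∏ k, (1 + |(s k : ℝ)|) ^ (m k)))
    (ρ : ℝ → ℝ) (hmeas : Measurable ρ)
    (hdecay : ∀ N : ℕ, ∃ A : ℝ, ∀ s : ℝ, |ρ s| ≤ A * ((1 + |s|) ^ N)⁻¹)
    (hint : (∫ s : ℝ, ρ s) = 1)
    (c : Fin n → ℝ) :
    ∃ C' > (0 : ℝ), ∀ lam : ℝ, 1 ≤ lam →
      (∑' j, ENNReal.ofReal
          (|(∏ k, Set.indicator (Set.Icc (-(lam * |c k|)) (lam * |c k|))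
                (fun _ => (1 : ℝ)) (lamb j k)) -
            ∏ k, ∫ s in (lamb j k - lam * |c k|)..(lamb j k + lam * |c k|), ρ s| *
          ‖u j‖ * ‖v j‖)) ≤
        ENNReal.ofReal (C' * lam ^ ((∑ i, m i) + n - 1)) := by
  obtain ⟨Q, hQ⟩ : ∃ Q : ℕ, ∀ k, m k + 2 ≤ Q := ⟨⌈∑ k, m k⌉₊ + 2, fun k => by
    push_cast
    linarith [single_le_sum (fun i _ => hm i) (mem_univ k), Nat.le_ceil (∑ k, m k)]⟩
  obtain ⟨K, hK0, hK⟩ := exists_abs_indicator_sub_intervalIntegral_le hmeas hdecay hint Q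
  set d : ℝ → Fin n → ℤ → ℝ≥0∞ := fun lam k z =>
    ENNReal.ofReal (2 ^ Q * (K + 1) * (1 + lam * |c k|) ^ m k * edgeProfile (lam * |c k|) z)
  set b : ℝ → Fin n → ℤ → ℝ≥0∞ := fun lam k z =>
    ENNReal.ofReal (2 ^ Q * (K + 1) * (1 + lam * |c k|) ^ m k * boxProfile (lam * |c k|) z)
  choose κ hκ0 hκ using fun k =>
    exists_tsum_ofReal_profile_le (abs_nonneg (c k)) (hm k) (L := 2 ^ Q * (K + 1)) (by positivity)
  set κ₀ := ∏ k, κ k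
  have hκ₀ : 0 ≤ κ₀ := prod_nonneg fun k _ => hκ0 k
  refine ⟨2 * |C| * n * κ₀ + 1, by positivity, fun lam hlam => ?_⟩
  have hlam0 : 0 < lam := by linarith
  have hpow : 0 ≤ lam ^ ((∑ i, m i) + n - 1) := Real.rpow_nonneg hlam0.le _
  calc _ ≤ 2 * ENNReal.ofReal C *
        ∑' s : Fin n → ℤ, ∑ k, d lam k (s k) * ∏ l ∈ univ.erase k, b lam l (s l) :=
        tsum_ofReal_abs_mul_norm_mul_norm_le lamb u v _ (fun s => by positivity) C hu hv _ _
          fun j => ofReal_abs_prod_sub_prod_mul_le hK0 (fun k => by positivity) hm hQ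
            (fun k => abs_indicator_Icc_le_ite _ _) fun k => hK _ (by positivity) _
    _ = 2 * ENNReal.ofReal C *
        ∑ k, (∑' z, d lam k z) * ∏ l ∈ univ.erase k, ∑' z, b lam l z := by
        rw [ENNReal.tsum_sum_mul_prod_erase]
    _ ≤ 2 * ENNReal.ofReal |C| * ENNReal.ofReal (n * κ₀ * lam ^ ((∑ i, m i) + n - 1)) := by
        gcongr
        · exact le_abs_self C
        · simpa using sum_mul_prod_erase_le_ofReal hlam0 hκ0 (fun k => (hκ k lam hlam).1)
            fun k => (hκ k lam hlam).2
    _ ≤ ENNReal.ofReal ((2 * |C| * n * κ₀ + 1) * lam ^ ((∑ i, m i) + n - 1)) := by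
        rw [← ENNReal.ofReal_ofNat 2, ← ENNReal.ofReal_mul zero_le_two,
          ← ENNReal.ofReal_mul (by positivity)]
        refine ENNReal.ofReal_le_ofReal ?_
        nlinarith

open scoped ENNReal in
/-- Sequence-level formulation of the paper's Tauberian Proposition 7.1: the difference
between the sharp joint spectral sum over the box `I(λ,c̄)` and its smoothing by `ρ` in
each variable is of one lower order in `λ`. -/
theorem tauberian_estimate (n : ℕ) (hn : 1 ≤ n)
    (lamb : ℕ → Fin n → ℝ) (u v : ℕ → ℂ)
    (m : Fin n → ℝ) (hm : ∀ k, 0 ≤ m k) (C : ℝ) (hC : 0 < C)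
    (hu : ∀ s : Fin n → ℤ,
      (∑' j, Set.indicator
          {j : ℕ | ∀ k, lamb j k ∈ Set.Icc ((s k : ℝ)) ((s k : ℝ) + 1)}
          (fun j => ENNReal.ofReal (‖u j‖ ^ 2)) j) ≤
        ENNReal.ofReal (C * ∏ k, (1 + |(s k : ℝ)|) ^ (m k)))
    (hv : ∀ s : Fin n → ℤ,
      (∑' j, Set.indicator
          {j : ℕ | ∀ k, lamb j k ∈ Set.Icc ((s k : ℝ)) ((s k : ℝ) + 1)}
          (fun j => ENNReal.ofReal (‖v j‖ ^ 2)) j) ≤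
        ENNReal.ofReal (C * ∏ k, (1 + |(s k : ℝ)|) ^ (m k)))
    (ρ : ℝ → ℝ) (hmeas : Measurable ρ)
    (hdecay : ∀ N : ℕ, ∃ A : ℝ, ∀ s : ℝ, |ρ s| ≤ A * ((1 + |s|) ^ N)⁻¹)
    (hint : (∫ s : ℝ, ρ s) = 1)
    (c : Fin n → ℝ) (hc : ∀ l, c l ≠ 0) :
    ∃ C' > (0 : ℝ), ∀ lam : ℝ, 1 ≤ lam →
      (∑' j, ENNReal.ofReal
          (|(∏ k, Set.indicator (Set.Icc (-(lam * |c k|)) (lam * |c k|))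
                (fun _ => (1 : ℝ)) (lamb j k)) -
            ∏ k, ∫ s in (lamb j k - lam * |c k|)..(lamb j k + lam * |c k|), ρ s| *
          ‖u j‖ * ‖v j‖)) ≤
        ENNReal.ofReal (C' * lam ^ ((∑ i, m i) + n - 1)) :=
  tauberian_estimate_general n lamb u v m hm C hu hv ρ hmeas hdecay hint c
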